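/- Let φ : G' → G be a full functor between transitive groupoids which is the identity on objects, let G' act on the right on a family F', with quotient family F₁(x) = F'(x)/~ (modulo the kernel isotropy K(x)) carrying the induced right G-action, and let ω' be a section of F' with induced section ω₁(x) = [ω'(x)] of F₁. Let G act on the right on a further family F with section ω, assume F is homogeneous (each isotropy group G(y,y) acts transitively on F(y)), and assume φ maps Stab_{F'}(ω') into Stab_F(ω). Then every f ∈ Stab_F(ω) admits a φ-preimage f' ∈ Stab_{F'}(ω') if and only if there exists a G-equivariant map c : F → F₁ with c(ω(x)) = ω₁(x) for every object x. (This is the abstract form of the projection theorem: the projection Stab_{F'}(ω') → Stab_F(ω) is an epimorphism iff the Vessiot structure equations c(ω) = ω₁ hold for some equivariant c.) -/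

import Mathlib

/-!
If stabilizers lift, the structure map is forced: by homogeneity and fullness every
`u ∈ F(φ x)` is `ω(φ x)·φ(g)` for some `g : x ⟶ x`, and one sets `c(u) = [ω'(x)·g]`. Two such
representations differ by a morphism whose image stabilizes `ω`; lifting it to the stabilizer
of `ω'` shows that the classes agree modulo the kernel, so `c` is well defined and equivariant.
Conversely, for `f` stabilizing `ω` and any preimage `f₀`, equivariance gives
`[ω'(x)] = c(ω(φ x)) = [ω'(y)·f₀]`, so correcting `f₀` by a kernel element stabilizes `ω'`.
-/

open CategoryTheory

/-- A right action of a groupoid `G` on a family of sets `F`: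
to each object `x` a set `F x`, to each morphism `f : x ⟶ y` a map
`F y → F x`, `u ↦ u·f = act f u`, with `u·1 = u` and `(u·f)·g = u·(g ≫ f)`. -/
structure RightAction (G : Type*) [Groupoid G] where
  F : G → Type*
  act : ∀ {x y : G}, (x ⟶ y) → F y → F x
  act_id : ∀ (y : G) (u : F y), act (𝟙 y) u = u
  act_comp : ∀ {w x y : G} (g : w ⟶ x) (f : x ⟶ y) (u : F y),
    act g (act f u) = act (g ≫ f) u

/-- The equivalence `u ~ u'` on `F' y` modulo the kernel
`K(y) = { k : y ⟶ y | φ(k) = 1 }` of a functor `φ`: `u' = u·k` for some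
`k ∈ K(y)`. -/
def kerRel {C D : Type*} [Groupoid C] [Groupoid D] (φ : C ⥤ D)
    (A : RightAction C) (y : C) (u u' : A.F y) : Prop :=
  ∃ k : y ⟶ y, φ.map k = 𝟙 (φ.obj y) ∧ u' = A.act k u

namespace RightAction

variable {G : Type*} [Groupoid G] (A : RightAction G)

theorem act_inv_act {x y : G} (f : x ⟶ y) (u : A.F y) :
    A.act (Groupoid.inv f) (A.act f u) = u := by
  rw [A.act_comp, Groupoid.inv_comp, A.act_id]

end RightAction

section Projection

variable {C D : Type*} [Groupoid C] [Groupoid D] (φ : C ⥤ D) (A : RightAction C)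

theorem kerRel_equivalence (y : C) : Equivalence (kerRel φ A y) where
  refl u := ⟨𝟙 y, φ.map_id y, (A.act_id y u).symm⟩
  symm := by
    rintro u v ⟨k, hk, rfl⟩
    exact ⟨Groupoid.inv k, by simp [Groupoid.inv_eq_inv, hk], (A.act_inv_act k u).symm⟩
  trans := by
    rintro u v w ⟨k, hk, rfl⟩ ⟨l, hl, rfl⟩
    exact ⟨l ≫ k, by simp [hl, hk], A.act_comp l k u⟩

theorem quot_mk_kerRel_eq_iff {y : C} {u u' : A.F y} :
    Quot.mk (kerRel φ A y) u = Quot.mk (kerRel φ A y) u' ↔ kerRel φ A y u u' :=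
  ⟨fun h => (kerRel_equivalence φ A y).eqvGen_iff.mp (Quot.eqvGen_exact h), Quot.sound⟩

variable (ω' : ∀ x : C, A.F x) (B : RightAction D) (ω : ∀ d : D, B.F d)

def LiftsStabilizer : Prop :=
  ∀ {x y : C} (f : φ.obj x ⟶ φ.obj y), B.act f (ω (φ.obj y)) = ω (φ.obj x) →
    ∃ f' : x ⟶ y, φ.map f' = f ∧ A.act f' (ω' y) = ω' x

def IsEquivariant (c : ∀ x : C, B.F (φ.obj x) → Quot (kerRel φ A x)) : Prop :=
  ∀ {x y : C} (f' : x ⟶ y) (u : B.F (φ.obj y)) (v : A.F y),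
    c y u = Quot.mk (kerRel φ A y) v →
      c x (B.act (φ.map f') u) = Quot.mk (kerRel φ A x) (A.act f' v)

variable {φ A ω' B ω}

theorem LiftsStabilizer.mk_act_eq (hlift : LiftsStabilizer φ A ω' B ω)
    {x y₁ y₂ : C} (h₁ : x ⟶ y₁) (h₂ : x ⟶ y₂)
    (h : B.act (φ.map h₁) (ω (φ.obj y₁)) = B.act (φ.map h₂) (ω (φ.obj y₂))) :
    Quot.mk (kerRel φ A x) (A.act h₁ (ω' y₁)) = Quot.mk (kerRel φ A x) (A.act h₂ (ω' y₂)) := by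
  have hstab : B.act (φ.map (Groupoid.inv h₁ ≫ h₂)) (ω (φ.obj y₂)) = ω (φ.obj y₁) := by
    rw [φ.map_comp, ← B.act_comp, ← h, B.act_comp, ← φ.map_comp, Groupoid.inv_comp,
      φ.map_id, B.act_id]
  obtain ⟨p, hp, hpω⟩ := hlift _ hstab
  refine (Quot.sound ⟨h₁ ≫ p ≫ Groupoid.inv h₂, ?_, ?_⟩).symm
  · rw [φ.map_comp, φ.map_comp, hp, ← φ.map_comp, ← φ.map_comp]
    simp
  · rw [A.act_comp, Category.assoc, Category.assoc, Groupoid.inv_comp, Category.comp_id,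
      ← A.act_comp, hpω]

theorem LiftsStabilizer.exists_isEquivariant (hlift : LiftsStabilizer φ A ω' B ω)
    (horbit : ∀ (x : C) (u : B.F (φ.obj x)), ∃ g : x ⟶ x, B.act (φ.map g) (ω (φ.obj x)) = u) :
    ∃ c : ∀ x : C, B.F (φ.obj x) → Quot (kerRel φ A x),
      IsEquivariant φ A B c ∧ ∀ x : C, c x (ω (φ.obj x)) = Quot.mk (kerRel φ A x) (ω' x) := by
  choose g hg using horbit
  have hc : ∀ {x y : C} (h : x ⟶ y),
      Quot.mk (kerRel φ A x) (A.act (g x (B.act (φ.map h) (ω (φ.obj y)))) (ω' x)) =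
        Quot.mk (kerRel φ A x) (A.act h (ω' y)) :=
    fun h => hlift.mk_act_eq _ h (hg _ _)
  refine ⟨fun x u => Quot.mk _ (A.act (g x u) (ω' x)), ?_, fun x => ?_⟩
  · intro x y f' u v hv
    obtain ⟨k, hk, rfl⟩ := (quot_mk_kerRel_eq_iff φ A).mp hv
    have hu : B.act (φ.map (f' ≫ k ≫ g y u)) (ω (φ.obj y)) = B.act (φ.map f') u := by
      rw [φ.map_comp, φ.map_comp, hk, Category.id_comp, ← B.act_comp, hg]
    dsimp only
    rw [← hu, hc, A.act_comp, A.act_comp, Category.assoc]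
  · simpa only [φ.map_id, B.act_id, A.act_id] using hc (𝟙 x)

theorem IsEquivariant.liftsStabilizer
    (hfull : ∀ {x y : C} (g : φ.obj x ⟶ φ.obj y), ∃ f : x ⟶ y, φ.map f = g)
    {c : ∀ x : C, B.F (φ.obj x) → Quot (kerRel φ A x)} (hc : IsEquivariant φ A B c)
    (hω : ∀ x : C, c x (ω (φ.obj x)) = Quot.mk (kerRel φ A x) (ω' x)) :
    LiftsStabilizer φ A ω' B ω := by
  intro x y f hf
  obtain ⟨f₀, rfl⟩ := hfull f
  have h := hc f₀ _ _ (hω y)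
  rw [hf, hω x] at h
  obtain ⟨k, hk, hkω⟩ := (quot_mk_kerRel_eq_iff φ A).mp h
  refine ⟨Groupoid.inv k ≫ f₀, by simp [Groupoid.inv_eq_inv, hk], ?_⟩
  rw [← A.act_comp, hkω, A.act_inv_act]

end Projection

theorem projection_theorem_general {C D : Type*}
    [Groupoid C] [Groupoid D] (φ : C ⥤ D)
    (hfull : ∀ {x y : C} (g : φ.obj x ⟶ φ.obj y), ∃ f : x ⟶ y, φ.map f = g)
    (A : RightAction C) (ω' : ∀ x : C, A.F x)
    (B : RightAction D) (ω : ∀ d : D, B.F d)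
    (hhom : ∀ (d : D) (u v : B.F d), ∃ g : d ⟶ d, B.act g u = v) :
    (∀ {x y : C} (f : φ.obj x ⟶ φ.obj y),
      B.act f (ω (φ.obj y)) = ω (φ.obj x) →
        ∃ f' : x ⟶ y, φ.map f' = f ∧ A.act f' (ω' y) = ω' x) ↔
    (∃ c : ∀ x : C, B.F (φ.obj x) → Quot (kerRel φ A x),
      (∀ {x y : C} (f' : x ⟶ y) (u : B.F (φ.obj y)) (v : A.F y),
        c y u = Quot.mk (kerRel φ A y) v →
          c x (B.act (φ.map f') u) = Quot.mk (kerRel φ A x) (A.act f' v)) ∧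
      (∀ x : C, c x (ω (φ.obj x)) = Quot.mk (kerRel φ A x) (ω' x))) := by
  have horbit : ∀ (x : C) (u : B.F (φ.obj x)),
      ∃ g : x ⟶ x, B.act (φ.map g) (ω (φ.obj x)) = u := by
    intro x u
    obtain ⟨g, hg⟩ := hhom _ (ω (φ.obj x)) u
    obtain ⟨g', rfl⟩ := hfull g
    exact ⟨g', hg⟩
  exact ⟨fun hlift => LiftsStabilizer.exists_isEquivariant hlift horbit,
    fun ⟨_, hc, hω⟩ => IsEquivariant.liftsStabilizer hfull hc hω⟩

/-- Abstract projection theorem. Let `φ : G' ⥤ G` be a full functor between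
transitive groupoids which is the identity (bijective) on objects, let `G'`
act on a family `F'` with section `ω'`, giving the quotient family
`F₁(x) = F'(x)/~` (modulo the kernel isotropy) with induced `G`-action
`[u]·φ(f') = [u·f']` and induced section `ω₁(x) = [ω'(x)]`. Let `G` act on a
homogeneous family `F` with section `ω`, and assume `φ` maps `Stab_{F'}(ω')`
into `Stab_F(ω)`. Then every `f ∈ Stab_F(ω)` admits a `φ`-preimage in
`Stab_{F'}(ω')` if and only if there is a `G`-equivariant map `c : F → F₁`
with `c(ω(x)) = ω₁(x)` for all objects `x` (the Vessiot structure
equations). -/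
theorem projection_theorem {C D : Type*}
    [Groupoid C] [Groupoid D] (φ : C ⥤ D)
    (htransC : ∀ x y : C, Nonempty (x ⟶ y))
    (htransD : ∀ a b : D, Nonempty (a ⟶ b))
    (hfull : ∀ {x y : C} (g : φ.obj x ⟶ φ.obj y), ∃ f : x ⟶ y, φ.map f = g)
    (hobj : Function.Bijective φ.obj)
    (A : RightAction C) (ω' : ∀ x : C, A.F x)
    (B : RightAction D) (ω : ∀ d : D, B.F d)
    (hhom : ∀ (d : D) (u v : B.F d), ∃ g : d ⟶ d, B.act g u = v)
    (hmap : ∀ {x y : C} (f' : x ⟶ y), A.act f' (ω' y) = ω' x →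
      B.act (φ.map f') (ω (φ.obj y)) = ω (φ.obj x)) :
    (∀ {x y : C} (f : φ.obj x ⟶ φ.obj y),
      B.act f (ω (φ.obj y)) = ω (φ.obj x) →
        ∃ f' : x ⟶ y, φ.map f' = f ∧ A.act f' (ω' y) = ω' x) ↔
    (∃ c : ∀ x : C, B.F (φ.obj x) → Quot (kerRel φ A x),
      (∀ {x y : C} (f' : x ⟶ y) (u : B.F (φ.obj y)) (v : A.F y),
        c y u = Quot.mk (kerRel φ A y) v →
          c x (B.act (φ.map f') u) = Quot.mk (kerRel φ A x) (A.act f' v)) ∧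
      (∀ x : C, c x (ω (φ.obj x)) = Quot.mk (kerRel φ A x) (ω' x))) :=
  projection_theorem_general φ hfull A ω' B ω hhom
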